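/- arXiv:1509.07059 — 2 statements merged into one kernel-verified Lean document; each statement's English description precedes it below -/
import Mathlib

section
/- Let C ⊆ F_4^n be an F_4-linear subspace. Then C is self-orthogonal with respect to the Hermitian inner product, i.e. ⟨x,y⟩ = Σ_{i=1}^{n} x_i·(y_i)^2 = 0 for all x, y ∈ C, if and only if every codeword of C has even Hamming weight. -/
/-- A quaternary linear code is Hermitian self-orthogonal if and only if all of
its codewords have even Hamming weight. -/
theorem hermitian_selfOrthogonal_iff_even_weights (F : Type) [Field F]
    [Fintype F] [DecidableEq F] (hF : Fintype.card F = 4) (n : ℕ)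
    (C : Submodule F (Fin n → F)) :
    (∀ x ∈ C, ∀ y ∈ C, ∑ i : Fin n, x i * (y i) ^ 2 = 0) ↔
    (∀ x ∈ C, Even (hammingNorm x)) := by
  have h4 : (4 : F) = 0 := by
    have := FiniteField.cast_card_eq_zero F
    rw [hF] at this; exact_mod_cast this
  have h2 : (2 : F) = 0 := by
    have hsq : (2 : F) ^ 2 = 0 := by linear_combination h4
    exact pow_eq_zero_iff (n := 2) (by norm_num) |>.mp hsq
  have hcube : ∀ a : F, a ≠ 0 → a ^ 3 = 1 := by
    intro a ha
    have := FiniteField.pow_card_sub_one_eq_one a ha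
    rwa [hF] at this
  have hcast : ∀ m : ℕ, ((m : F) = 0 ↔ Even m) := by
    intro m
    constructor
    · intro hm
      rcases Nat.even_or_odd m with he | ho
      · exact he
      · exfalso
        obtain ⟨k, hk⟩ := ho
        rw [hk] at hm
        push_cast at hm
        have : (1 : F) = 0 := by linear_combination hm - k * h2
        exact one_ne_zero this
    · rintro ⟨k, rfl⟩
      push_cast
      linear_combination (k : F) * h2
  have hself : ∀ x : Fin n → F, (∑ i, x i * (x i) ^ 2 = 0 ↔ Even (hammingNorm x)) := by
    intro x
    have hsum : ∑ i, x i * (x i) ^ 2 = (hammingNorm x : F) := by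
      rw [hammingNorm, Finset.card_filter]
      push_cast
      apply Finset.sum_congr rfl
      intro i _
      by_cases hi : x i = 0
      · simp [hi]
      · simp [hi, ← pow_succ', hcube (x i) hi]
    rw [hsum, hcast]
  constructor
  · intro h x hx
    exact (hself x).mp (h x hx x hx)
  · intro h x hx y hy
    -- symmetry of the form on C
    have hsymm : ∀ u v : Fin n → F, u ∈ C → v ∈ C →
        ∑ i, u i * (v i) ^ 2 = ∑ i, v i * (u i) ^ 2 := by
      intro u v hu hv
      have hs := (hself (u + v)).mpr (h _ (C.add_mem hu hv))
      have hu' := (hself u).mpr (h u hu)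
      have hv' := (hself v).mpr (h v hv)
      have expand : ∀ i, (u i + v i) * (u i + v i) ^ 2 =
          u i * (u i) ^ 2 + v i * (v i) ^ 2 + (u i * (v i) ^ 2 + v i * (u i) ^ 2) := by
        intro i
        linear_combination ((u i) ^ 2 * v i + u i * (v i) ^ 2) * h2
      simp only [Pi.add_apply] at hs
      rw [Finset.sum_congr rfl (fun i _ => expand i), Finset.sum_add_distrib,
        Finset.sum_add_distrib, hu', hv'] at hs
      rw [Finset.sum_add_distrib] at hs
      have : ∑ i, u i * (v i) ^ 2 = -∑ i, v i * (u i) ^ 2 := by linear_combination hs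
      rw [this]
      have : -∑ i, v i * (u i) ^ 2 = ∑ i, v i * (u i) ^ 2 := by
        have := h2
        linear_combination (-(∑ i, v i * (u i) ^ 2)) * h2
      exact this
    -- find a ∈ F with a ≠ 0, a ≠ 1
    obtain ⟨a, ha0, ha1⟩ : ∃ a : F, a ≠ 0 ∧ a ≠ 1 := by
      by_contra hc
      push_neg at hc
      have hsub : (Finset.univ : Finset F) ⊆ {0, 1} := by
        intro a _
        by_cases h0 : a = 0
        · simp [h0]
        · simp [hc a h0]
      have hle := Finset.card_le_card hsub
      rw [Finset.card_univ, hF] at hle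
      have hle2 : ({0, 1} : Finset F).card ≤ 2 :=
        (Finset.card_insert_le _ _).trans (by simp)
      omega
    set B := ∑ i, x i * (y i) ^ 2 with hB
    have h1 : ∑ i, (a • x) i * (y i) ^ 2 = a * B := by
      rw [hB, Finset.mul_sum]
      apply Finset.sum_congr rfl
      intro i _
      simp [mul_assoc]
    have h2' : ∑ i, y i * ((a • x) i) ^ 2 = a ^ 2 * B := by
      rw [hB, hsymm x y hx hy, Finset.mul_sum]
      apply Finset.sum_congr rfl
      intro i _
      simp [mul_pow]
      ring
    have hax := hsymm (a • x) y (C.smul_mem a hx) hy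
    rw [h1, h2'] at hax
    have hane : a ^ 2 ≠ a := by
      intro hcon
      have : a * (a - 1) = 0 := by linear_combination hcon
      rcases mul_eq_zero.mp this with h | h
      · exact ha0 h
      · exact ha1 (by linear_combination h)
    have : (a - a ^ 2) * B = 0 := by linear_combination hax
    rcases mul_eq_zero.mp this with h | h
    · exact absurd (by linear_combination -h : a ^ 2 = a) hane
    · exact h
end

section
/- Let P_1, …, P_n be nonzero vectors in F_4^r representing n pairwise distinct points of PG(r−1,4), and let C = {(v·P_1, …, v·P_n) : v ∈ F_4^r} ⊆ F_4^n be the corresponding quaternary linear code, where v·P_j = Σ_{i} v_i (P_j)_i. Then every hyperplane H of PG(r−1,4) satisfies |{j : [P_j] ∈ H}| ≡ n (mod 2) if and only if C is self-orthogonal with respect to the Hermitian inner product, i.e. Σ_{j=1}^{n} x_j·(y_j)^2 = 0 for all x, y ∈ C. -/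
lemma key_parity {F : Type} [Field F] [Fintype F] (hF : Fintype.card F = 4)
    (hchar : CharP F 2) {n : ℕ} (a : Fin n → F) :
    {j | a j = 0}.ncard ≡ n [MOD 2] ↔ ∑ j, (a j) ^ 3 = 0 := by
  classical
  haveI := hchar
  set Z := Finset.univ.filter (fun j => a j = 0) with hZ
  set N := Finset.univ.filter (fun j => ¬ a j = 0) with hN
  have hZN : Z.card + N.card = n := by
    rw [hZ, hN, Finset.card_filter_add_card_filter_not, Finset.card_univ,
      Fintype.card_fin]
  have hncard : {j | a j = 0}.ncard = Z.card := by
    have : {j | a j = 0} = (↑Z : Set (Fin n)) := by ext j; simp [hZ]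
    rw [this, Set.ncard_coe_finset]
  have hsum : ∑ j, (a j) ^ 3 = (N.card : F) := by
    have hout : ∀ j ∈ Finset.univ, j ∉ N → (a j) ^ 3 = 0 := by
      intro j _ hj
      have : a j = 0 := by simpa [hN] using hj
      simp [this]
    rw [← Finset.sum_subset (Finset.subset_univ N) hout]
    have hone : ∀ j ∈ N, (a j) ^ 3 = 1 := by
      intro j hj
      have hne : a j ≠ 0 := by simpa [hN] using hj
      have h := FiniteField.pow_card_sub_one_eq_one (a j) hne
      rw [hF] at h; norm_num at h; exact h
    rw [Finset.sum_congr rfl hone, Finset.sum_const, nsmul_eq_mul, mul_one]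
  have hcast : ((N.card : F) = 0) ↔ 2 ∣ N.card := CharP.cast_eq_zero_iff F 2 N.card
  rw [hncard, hsum, hcast, Nat.ModEq]
  omega

/-- Given nonzero vectors `P 1, …, P n` in `F_4^r` representing pairwise distinct
points of PG(r−1,4), every hyperplane of PG(r−1,4) meets `{[P j]}` in a number of
points congruent to `n` mod 2 if and only if the corresponding quaternary linear
code is self-orthogonal with respect to the Hermitian inner product. -/
theorem hyperplane_parity_iff_hermitian_selfOrthogonal (F : Type) [Field F]
    [Fintype F] (hF : Fintype.card F = 4) (r n : ℕ)
    (P : Fin n → (Fin r → F)) (hP : ∀ j, P j ≠ 0)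
    (hdist : ∀ j j' : Fin n, j ≠ j' →
      Projectivization.mk F (P j) (hP j) ≠ Projectivization.mk F (P j') (hP j')) :
    (∀ v : Fin r → F, v ≠ 0 →
      {j : Fin n | (Projectivization.mk F (P j) (hP j)) ∈
        {X : Projectivization F (Fin r → F) |
          ∑ i : Fin r, v i * X.rep i = 0}}.ncard ≡ n [MOD 2]) ↔
    (∀ x ∈ Set.range (fun v : Fin r → F => fun j : Fin n => ∑ i : Fin r, v i * P j i),
      ∀ y ∈ Set.range (fun v : Fin r → F => fun j : Fin n => ∑ i : Fin r, v i * P j i),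
        ∑ j : Fin n, x j * (y j) ^ 2 = 0) := by
  classical
  -- characteristic 2
  have h4 : ((4 : ℕ) : F) = 0 := by rw [← hF]; exact FiniteField.cast_card_eq_zero F
  have hchar : CharP F 2 := by
    have hdvd : ringChar F ∣ 4 := (ringChar.spec F 4).mp h4
    haveI := ringChar.charP F
    have hprime : Nat.Prime (ringChar F) := CharP.char_is_prime F (ringChar F)
    have hdvd2 : ringChar F ∣ 2 := by
      have h42 : (4 : ℕ) = 2 ^ 2 := by norm_num
      exact hprime.dvd_of_dvd_pow (h42 ▸ hdvd)
    have h2 : ringChar F = 2 := (Nat.prime_dvd_prime_iff_eq hprime Nat.prime_two).mp hdvd2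
    exact h2 ▸ ringChar.charP F
  haveI := hchar
  have h2z : (2 : F) = 0 := by
    have := CharP.cast_eq_zero_iff F 2 2
    simpa using this.mpr ⟨1, rfl⟩
  set f : (Fin r → F) → Fin n → F := fun v j => ∑ i, v i * P j i with hf
  -- membership rewriting
  have hmem : ∀ (v : Fin r → F) (j : Fin n),
      ((∑ i : Fin r, v i * (Projectivization.mk F (P j) (hP j)).rep i = 0) ↔ f v j = 0) := by
    intro v j
    obtain ⟨a, ha⟩ := (Projectivization.mk_eq_mk_iff F _ _ _ (hP j)).mp
      (Projectivization.mk_rep (Projectivization.mk F (P j) (hP j)))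
    have hrep : ∀ i, (Projectivization.mk F (P j) (hP j)).rep i = (a : F) * P j i := by
      intro i; rw [← ha]; simp [Units.smul_def]
    have hs : ∑ i : Fin r, v i * (Projectivization.mk F (P j) (hP j)).rep i
        = (a : F) * f v j := by
      rw [hf]; simp only [hrep, Finset.mul_sum]; congr 1; ext i; ring
    rw [hs, mul_eq_zero]
    simp [a.ne_zero]
  have hset : ∀ v : Fin r → F,
      {j : Fin n | (Projectivization.mk F (P j) (hP j)) ∈
        {X : Projectivization F (Fin r → F) |
          ∑ i : Fin r, v i * X.rep i = 0}} = {j | f v j = 0} := by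
    intro v; ext j; exact hmem v j
  have hkey : ∀ v : Fin r → F,
      ({j | f v j = 0}.ncard ≡ n [MOD 2] ↔ ∑ j, (f v j) ^ 3 = 0) :=
    fun v => key_parity hF hchar (f v)
  -- linearity facts
  have hfadd : ∀ u w j, f (u + w) j = f u j + f w j := by
    intro u w j; simp [hf, add_mul, Finset.sum_add_distrib]
  have hfsmul : ∀ (c : F) u j, f (c • u) j = c * f u j := by
    intro c u j; simp [hf, Finset.mul_sum, mul_assoc]
  have hfzero : ∀ j, f 0 j = 0 := by intro j; simp [hf]
  constructor
  · intro H
    -- diagonal vanishing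
    have hdiag : ∀ v : Fin r → F, ∑ j, (f v j) ^ 3 = 0 := by
      intro v
      by_cases hv : v = 0
      · subst hv; simp [hfzero]
      · exact (hkey v).mp (by rw [← hset v]; exact H v hv)
    -- symmetry of cross terms
    have hsym : ∀ u w : Fin r → F,
        ∑ j, (f u j) ^ 2 * f w j = ∑ j, f u j * (f w j) ^ 2 := by
      intro u w
      have hexp : ∀ x y : F, (x + y) ^ 3 = (x ^ 3 + y ^ 3) + (x ^ 2 * y + x * y ^ 2) := by
        intro x y; linear_combination (x ^ 2 * y + x * y ^ 2) * h2z
      have h0 : ∑ j, (f u j + f w j) ^ 3 = 0 := by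
        rw [← hdiag (u + w)]; exact Finset.sum_congr rfl (fun j _ => by rw [hfadd])
      rw [Finset.sum_congr rfl (fun j (_ : j ∈ Finset.univ) => hexp (f u j) (f w j))] at h0
      rw [Finset.sum_add_distrib, Finset.sum_add_distrib, Finset.sum_add_distrib,
        hdiag u, hdiag w] at h0
      simp only [zero_add] at h0
      have h1 := add_eq_zero_iff_eq_neg.mp h0
      rw [h1, CharTwo.neg_eq]
    intro x hx y hy
    obtain ⟨u, rfl⟩ := hx
    obtain ⟨w, rfl⟩ := hy
    show ∑ j, f u j * (f w j) ^ 2 = 0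
    obtain ⟨c, hc0, hc1⟩ : ∃ c : F, c ≠ 0 ∧ c ≠ 1 := by
      by_contra h; push_neg at h
      have hsub : (Finset.univ : Finset F) ⊆ {0, 1} := by
        intro x _
        simp only [Finset.mem_insert, Finset.mem_singleton]
        rcases eq_or_ne x 0 with h0 | h0
        · exact Or.inl h0
        · exact Or.inr (h x h0)
      have hle := Finset.card_le_card hsub
      rw [Finset.card_univ, hF] at hle
      have hle2 : ({0, 1} : Finset F).card ≤ 2 :=
        (Finset.card_insert_le _ _).trans (by simp)
      omega
    have e1 : ∑ j, f (c • u) j * (f w j) ^ 2 = c * ∑ j, f u j * (f w j) ^ 2 := by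
      rw [Finset.mul_sum]; exact Finset.sum_congr rfl (fun j _ => by rw [hfsmul]; ring)
    have e2 : ∑ j, (f (c • u) j) ^ 2 * f w j = c ^ 2 * ∑ j, (f u j) ^ 2 * f w j := by
      rw [Finset.mul_sum]; exact Finset.sum_congr rfl (fun j _ => by rw [hfsmul]; ring)
    have h1 := hsym (c • u) w
    rw [e1, e2, hsym u w] at h1
    have hBzero : (c ^ 2 - c) * (∑ j, f u j * (f w j) ^ 2) = 0 := by
      rw [sub_mul, h1]; ring
    have hcc : c ^ 2 - c ≠ 0 := by
      intro h
      have hfac : c * (c - 1) = 0 := by linear_combination h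
      rcases mul_eq_zero.mp hfac with h' | h'
      · exact hc0 h'
      · exact hc1 (sub_eq_zero.mp h')
    exact (mul_eq_zero.mp hBzero).resolve_left hcc
  · intro H v hv
    rw [hset v, hkey v]
    have hxy := H (f v) ⟨v, rfl⟩ (f v) ⟨v, rfl⟩
    rw [← hxy]
    exact Finset.sum_congr rfl (fun j _ => by ring)
end
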